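/- Lemma 2: Let F : GL(n,ℝ) × gl(n,ℝ) → ℝ be smooth and S-invariant, and define f : gl(n,ℝ) → ℝ by f(L) = F(1_n, L). Then for every L ∈ gl(n,ℝ): ∇₁F(1_n, L) = (r₊ − R_s)(∇'f(L) − ∇f(L)) and d₂F(1_n, L) = df(L). -/

import Mathlib

open Matrix

noncomputable section

attribute [local instance] Matrix.frobeniusNormedAddCommGroup Matrix.frobeniusNormedSpace

/-- `gl n` is the space of real `n × n` matrices. -/
abbrev gl (n : ℕ) := Matrix (Fin n) (Fin n) ℝ

variable {n : ℕ}

/-- The strictly upper triangular part `X_>`. -/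
def upPart (X : gl n) : gl n := Matrix.of fun i j => if i < j then X i j else 0

/-- The diagonal part `X_0`. -/
def diagPart (X : gl n) : gl n := Matrix.of fun i j => if i = j then X i j else 0

/-- The strictly lower triangular part `X_<`. -/
def lowPart (X : gl n) : gl n := Matrix.of fun i j => if j < i then X i j else 0

/-- The trace form `⟨X,Y⟩ = tr(XY)`. -/
def trForm (X Y : gl n) : ℝ := (X * Y).trace

/-- `R(X) = ½(X_> + X_0 − X_<) + (X_<)ᵀ`. -/
def Rop (X : gl n) : gl n := (1/2 : ℝ) • (upPart X + diagPart X - lowPart X) + (lowPart X)ᵀ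

/-- `R_a(X) = ½(X_> − X_<)`, the anti-symmetric part of `R`. -/
def Ra (X : gl n) : gl n := (1/2 : ℝ) • (upPart X - lowPart X)

/-- `R_s(X) = ½X_0 + (X_<)ᵀ`, the symmetric part of `R`. -/
def Rs (X : gl n) : gl n := (1/2 : ℝ) • diagPart X + (lowPart X)ᵀ

/-- `r₊ = R_a + ½·id`. -/
def rPlus (X : gl n) : gl n := Ra X + (1/2 : ℝ) • X

/-- `r₋ = R_a − ½·id`. -/
def rMinus (X : gl n) : gl n := Ra X - (1/2 : ℝ) • X

/-- The skew-symmetric part `Z⁺ = ½(Z − Zᵀ)`. -/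
def skewPart (X : gl n) : gl n := (1/2 : ℝ) • (X - Xᵀ)

/-- The symmetric part `Z⁻ = ½(Z + Zᵀ)`. -/
def symPart (X : gl n) : gl n := (1/2 : ℝ) • (X + Xᵀ)

/-- `df` is the gradient of `f` with respect to the trace form:
`tr(df(L)·Y)` is the derivative of `f` at `L` in direction `Y`. -/
def IsGradient (f : gl n → ℝ) (df : gl n → gl n) : Prop :=
  ∀ L Y : gl n, HasDerivAt (fun t : ℝ => f (L + t • Y)) (trForm (df L) Y) 0

/-- `f : gl(n,ℝ) → ℝ` is smooth. -/
def SmoothG (f : gl n → ℝ) : Prop := ContDiff ℝ (⊤ : ℕ∞) f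

/-- The quadratic r-matrix bracket `{f,h}₂(L)`, expressed via the gradient
functions `df`, `dh` of `f` and `h`:
`⟨∇f, R_a∇h⟩ − ⟨∇'f, R_a∇'h⟩ + ⟨∇f, R_s∇'h⟩ − ⟨∇'f, R_s∇h⟩`
with `∇f = L·df(L)` and `∇'f = df(L)·L`. -/
def quadBr (df dh : gl n → gl n) (L : gl n) : ℝ :=
  trForm (L * df L) (Ra (L * dh L)) - trForm (df L * L) (Ra (dh L * L))
    + trForm (L * df L) (Rs (dh L * L)) - trForm (df L * L) (Rs (L * dh L))

/-- The linear r-matrix bracket `{f,h}₁(L) = ⟨L, [R df(L), dh(L)] + [df(L), R dh(L)]⟩`. -/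
def linBr (df dh : gl n → gl n) (L : gl n) : ℝ :=
  trForm L (⁅Rop (df L), dh L⁆ + ⁅df L, Rop (dh L)⁆)

/-- The Toda Hamiltonians `h_k(L) = (1/k)·tr(L^k)`. -/
def hamH (k : ℕ) (L : gl n) : ℝ := (1 / (k : ℝ)) * (L ^ k).trace

/-- `a` is an orthogonal matrix. -/
def IsOrth (a : gl n) : Prop := aᵀ * a = 1

/-- `b` belongs to `B`: upper triangular with strictly positive diagonal entries. -/
def InB (b : gl n) : Prop := b.BlockTriangular id ∧ ∀ i, 0 < b i i

/-- `F : 𝔐 → ℝ` is invariant under the action `(g,L) ↦ (a g b⁻¹, a L a⁻¹)`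
of `S = O(n,ℝ) × B` on `𝔐 = GL(n,ℝ) × gl(n,ℝ)`. -/
def SInvariant (F : gl n × gl n → ℝ) : Prop :=
  ∀ a b g L : gl n, IsOrth a → InB b → IsUnit g.det →
    F (a * g * b⁻¹, a * L * a⁻¹) = F (g, L)

/-- `F` is smooth on `𝔐 = GL(n,ℝ) × gl(n,ℝ)`. -/
def SmoothOnM (F : gl n × gl n → ℝ) : Prop :=
  ContDiffOn ℝ (⊤ : ℕ∞) F {p : gl n × gl n | IsUnit p.1.det}

/-- `N` is the left derivative `∇₁F`:
`⟨∇₁F(g,L), X⟩ = d/dt|₀ F(e^{tX} g, L)` for all `X`. -/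
def IsGrad1 (F : gl n × gl n → ℝ) (N : gl n × gl n → gl n) : Prop :=
  ∀ g L : gl n, IsUnit g.det → ∀ X : gl n,
    HasDerivAt (fun t : ℝ => F (NormedSpace.exp (t • X) * g, L)) (trForm (N (g, L)) X) 0

/-- `N` is the right derivative `∇₁'F`:
`⟨∇₁'F(g,L), X⟩ = d/dt|₀ F(g e^{tX}, L)` for all `X`. -/
def IsGrad1' (F : gl n × gl n → ℝ) (N : gl n × gl n → gl n) : Prop :=
  ∀ g L : gl n, IsUnit g.det → ∀ X : gl n,
    HasDerivAt (fun t : ℝ => F (g * NormedSpace.exp (t • X), L)) (trForm (N (g, L)) X) 0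

/-- `D` is the gradient `d₂F` of `F` in the second argument. -/
def IsGrad2 (F : gl n × gl n → ℝ) (D : gl n × gl n → gl n) : Prop :=
  ∀ g L : gl n, IsUnit g.det → ∀ Y : gl n,
    HasDerivAt (fun t : ℝ => F (g, L + t • Y)) (trForm (D (g, L)) Y) 0

/-- The quadratic bracket `{F,H}₂(g,L)` on `𝔐`, expressed through the derivative data
`nf = ∇₁F(g,L)`, `nf' = ∇₁'F(g,L)`, `d2f = d₂F(g,L)` and likewise for `H`:
`⟨R_a∇₁F, ∇₁H⟩ − ⟨R_a∇₁'F, ∇₁'H⟩ + ⟨∇₂F − ∇₂'F, r₊∇₂'H − r₋∇₂H⟩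
 + ⟨∇₁F, r₊∇₂'H − r₋∇₂H⟩ − ⟨∇₁H, r₊∇₂'F − r₋∇₂F⟩`. -/
def pb2 (nf nf' d2f nh nh' d2h L : gl n) : ℝ :=
  trForm (Ra nf) nh - trForm (Ra nf') nh'
    + trForm (L * d2f - d2f * L) (rPlus (d2h * L) - rMinus (L * d2h))
    + trForm nf (rPlus (d2h * L) - rMinus (L * d2h))
    - trForm nh (rPlus (d2f * L) - rMinus (L * d2f))

/-- The canonical bracket `{F,H}₁(g,L)` on `𝔐`, expressed through the derivative data:
`⟨∇₁F, d₂H⟩ − ⟨∇₁H, d₂F⟩ + ⟨L, [d₂F, d₂H]⟩`. -/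
def pb1 (nf d2f nh d2h L : gl n) : ℝ :=
  trForm nf d2h - trForm nh d2f + trForm L ⁅d2f, d2h⁆


-- ===== auxiliary material =====

attribute [local instance] Matrix.frobeniusNormedRing Matrix.frobeniusNormedAlgebra

section Aux

variable {n : ℕ}

lemma trForm_std (A : gl n) (p q : Fin n) :
    trForm A (Matrix.single p q 1) = A q p := by
  simp [trForm, Matrix.trace, Matrix.diag, Matrix.mul_apply, Matrix.single,
    ite_and, Finset.sum_ite_eq]

lemma trForm_ext {A B : gl n} (h : ∀ Y, trForm A Y = trForm B Y) : A = B := by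
  ext p q
  have := h (Matrix.single q p 1)
  simpa [trForm_std] using this

/-- the entry map as a continuous linear map. -/
def entryCLM (i j : Fin n) : gl n →L[ℝ] ℝ :=
  LinearMap.toContinuousLinearMap
    { toFun := fun M : gl n => M i j
      map_add' := fun A B => rfl
      map_smul' := fun c A => rfl }

lemma entryCLM_apply (i j : Fin n) (M : gl n) : entryCLM i j M = M i j := rfl

lemma isClosed_BT : IsClosed {M : gl n | M.BlockTriangular id} := by
  have : {M : gl n | M.BlockTriangular id}
      = ⋂ (p : Fin n × Fin n), {M : gl n | id p.2 < id p.1 → M p.1 p.2 = 0} := by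
    ext M
    constructor
    · intro h
      exact Set.mem_iInter.2 fun p hp => h hp
    · intro h i j hij
      exact Set.mem_iInter.1 h (i, j) hij
  rw [this]
  refine isClosed_iInter fun p => ?_
  by_cases hp : id p.2 < id p.1
  · have : {M : gl n | id p.2 < id p.1 → M p.1 p.2 = 0}
        = (entryCLM p.1 p.2) ⁻¹' {0} := by
      ext M
      simp only [Set.mem_setOf_eq, Set.mem_preimage, Set.mem_singleton_iff, entryCLM_apply]
      exact ⟨fun h => h hp, fun h _ => h⟩
    rw [this]
    exact isClosed_singleton.preimage (entryCLM p.1 p.2).continuous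
  · have : {M : gl n | id p.2 < id p.1 → M p.1 p.2 = 0} = Set.univ := by
      ext M
      simp only [Set.mem_setOf_eq, Set.mem_univ, iff_true]
      exact fun hq => absurd hq hp
    rw [this]; exact isClosed_univ

lemma BT_pow {X : gl n} (hX : X.BlockTriangular id) (k : ℕ) :
    (X ^ k).BlockTriangular id := by
  induction k with
  | zero => simpa using Matrix.blockTriangular_one
  | succ k ih => rw [pow_succ]; exact ih.mul hX

lemma BT_smul {X : gl n} (hX : X.BlockTriangular id) (c : ℝ) :
    (c • X).BlockTriangular id := fun i j h => by
  simp [Matrix.smul_apply, hX h]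

lemma exp_BT {X : gl n} (hX : X.BlockTriangular id) :
    (NormedSpace.exp X).BlockTriangular id := by
  have hs : HasSum (fun k : ℕ => ((k.factorial : ℝ)⁻¹) • X ^ k) (NormedSpace.exp X) :=
    NormedSpace.exp_series_hasSum_exp' X
  refine isClosed_BT.mem_of_tendsto hs.tendsto_sum_nat
    (Filter.Eventually.of_forall fun m => ?_)
  refine Finset.sum_induction _ (fun M : gl n => M.BlockTriangular id)
    (fun a b ha hb => ha.add hb) Matrix.blockTriangular_zero (fun k _ => ?_)
  exact BT_smul (BT_pow hX k) _

lemma exp_mul_exp_neg (A : gl n) :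
    NormedSpace.exp A * NormedSpace.exp (-A) = 1 := by
  rw [← Matrix.exp_add_of_commute A (-A) (Commute.refl A).neg_right]
  simp [NormedSpace.exp_zero]

lemma exp_neg_mul_exp (A : gl n) :
    NormedSpace.exp (-A) * NormedSpace.exp A = 1 := by
  have := exp_mul_exp_neg (-A)
  simpa using this

lemma hasDerivAt_expCurve_zero (X : gl n) :
    HasDerivAt (fun t : ℝ => NormedSpace.exp (t • X)) X 0 := by
  have := hasDerivAt_exp_smul_const (𝕂 := ℝ) X (0 : ℝ)
  rw [zero_smul, NormedSpace.exp_zero, one_mul] at this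
  exact this

lemma eventually_diag_pos (X : gl n) :
    ∀ᶠ t in nhds (0 : ℝ), ∀ i, 0 < (NormedSpace.exp (-(t • X))) i i := by
  rw [Filter.eventually_all]
  intro i
  have hc : Continuous fun t : ℝ => (NormedSpace.exp (-(t • X))) i i := by
    exact (entryCLM i i).continuous.comp
      (NormedSpace.exp_continuous.comp ((continuous_id.smul continuous_const).neg))
  have key : ∀ᶠ y in nhds ((fun t : ℝ => (NormedSpace.exp (-(t • X))) i i) 0), 0 < y := by
    have h0 : (fun t : ℝ => (NormedSpace.exp (-(t • X))) i i) 0 = 1 := by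
      simp [NormedSpace.exp_zero, Matrix.one_apply]
    rw [h0]
    exact eventually_gt_nhds one_pos
  exact hc.continuousAt.eventually key

lemma stdBasis_transpose (p q : Fin n) :
    (Matrix.single p q (1 : ℝ))ᵀ = Matrix.single q p 1 := by
  ext i j
  simp [Matrix.single, Matrix.transpose_apply, and_comm]

lemma trForm_sub_right (A X Y : gl n) :
    trForm A (X - Y) = trForm A X - trForm A Y := by
  simp [trForm, Matrix.mul_sub]


lemma rhs_entry (Z : gl n) (p q : Fin n) :
    (rPlus Z - Rs Z) p q = if p < q then Z p q - Z q p else 0 := by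
  rcases lt_trichotomy p q with h | h | h
  · simp only [rPlus, Ra, Rs, upPart, lowPart, diagPart, Matrix.sub_apply,
      Matrix.add_apply, Matrix.smul_apply, Matrix.transpose_apply, Matrix.of_apply,
      smul_eq_mul]
    rw [if_pos h, if_neg (asymm h), if_neg h.ne, if_pos h, if_pos h]
    ring
  · subst h
    simp only [rPlus, Ra, Rs, upPart, lowPart, diagPart, Matrix.sub_apply,
      Matrix.add_apply, Matrix.smul_apply, Matrix.transpose_apply, Matrix.of_apply,
      smul_eq_mul, lt_self_iff_false, if_false, eq_self_iff_true, if_true]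
    ring
  · simp only [rPlus, Ra, Rs, upPart, lowPart, diagPart, Matrix.sub_apply,
      Matrix.add_apply, Matrix.smul_apply, Matrix.transpose_apply, Matrix.of_apply,
      smul_eq_mul]
    rw [if_neg (asymm h), if_pos h, if_neg h.ne', if_neg (asymm h), if_neg (asymm h)]
    ring


end Aux

/-- Lemma 2: for `S`-invariant `F` and `f(L) = F(1ₙ, L)`:
`∇₁F(1ₙ,L) = (r₊ − R_s)(∇'f(L) − ∇f(L))` and `d₂F(1ₙ,L) = df(L)`. -/
theorem stmt16 (n : ℕ) (F : gl n × gl n → ℝ)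
    (hF : SmoothOnM F) (hFinv : SInvariant F)
    (N1 D2 : gl n × gl n → gl n)
    (h1 : IsGrad1 F N1) (h2 : IsGrad2 F D2)
    (df : gl n → gl n) (hdf : IsGradient (fun L : gl n => F (1, L)) df)
    (L : gl n) :
    N1 (1, L) = rPlus (df L * L - L * df L) - Rs (df L * L - L * df L) ∧
    D2 (1, L) = df L := by
  classical
  have hdet1 : IsUnit (Matrix.det (1 : gl n)) := by simp
  -- differentiability of F at (1, L)
  have hUopen : IsOpen {p : gl n × gl n | IsUnit p.1.det} := by
    have hceq : {p : gl n × gl n | IsUnit p.1.det}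
        = (fun p : gl n × gl n => p.1.det) ⁻¹' ({0}ᶜ) := by
      ext p; simp [isUnit_iff_ne_zero]
    rw [hceq]
    exact (isClosed_singleton.isOpen_compl).preimage (continuous_fst.matrix_det)
  have hmem : ((1 : gl n), L) ∈ {p : gl n × gl n | IsUnit p.1.det} := hdet1
  have hdiff : DifferentiableAt ℝ F ((1 : gl n), L) :=
    (hF.contDiffAt (hUopen.mem_nhds hmem)).differentiableAt (by simp)
  set φ := fderiv ℝ F ((1 : gl n), L) with hφdef
  have hφ : HasFDerivAt F φ ((1 : gl n), L) := hdiff.hasFDerivAt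
  set Nm := N1 (1, L) with hNmdef
  -- ⟪N1, X⟫ = φ (X, 0)
  have hφ1 : ∀ X : gl n, trForm Nm X = φ (X, (0 : gl n)) := by
    intro X
    have hc1 : HasDerivAt (fun t : ℝ => ((NormedSpace.exp (t • X) * 1 : gl n), L))
        ((X, (0 : gl n)) : gl n × gl n) 0 := by
      have h := (hasDerivAt_expCurve_zero X).mul_const (1 : gl n)
      have h' : HasDerivAt (fun t : ℝ => (NormedSpace.exp (t • X) * 1 : gl n)) X 0 := by
        simp only [mul_one] at h ⊢
        exact h
      exact h'.prodMk (hasDerivAt_const 0 L)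
    have hc0 : ((fun t : ℝ => ((NormedSpace.exp (t • X) * 1 : gl n), L)) 0)
        = ((1 : gl n), L) := by
      simp [NormedSpace.exp_zero]
    have hφ' : HasFDerivAt F φ ((fun t : ℝ =>
        ((NormedSpace.exp (t • X) * 1 : gl n), L)) 0) := by rw [hc0]; exact hφ
    have hcomp := hφ'.comp_hasDerivAt (0 : ℝ) hc1
    exact (h1 1 L hdet1 X).unique hcomp
  -- ⟪D2, Y⟫ = φ (0, Y)
  have hφ2 : ∀ Y : gl n, trForm (D2 (1, L)) Y = φ ((0 : gl n), Y) := by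
    intro Y
    have hc1 : HasDerivAt (fun t : ℝ => ((1 : gl n), L + t • Y))
        (((0 : gl n), Y) : gl n × gl n) 0 := by
      have h : HasDerivAt (fun t : ℝ => L + t • Y) Y 0 := by
        have h0 := ((hasDerivAt_id (0 : ℝ)).smul_const Y).const_add L
        simp only [one_smul, id_eq] at h0
        exact h0
      exact (hasDerivAt_const 0 (1 : gl n)).prodMk h
    have hc0 : ((fun t : ℝ => ((1 : gl n), L + t • Y)) 0) = ((1 : gl n), L) := by simp
    have hφ' : HasFDerivAt F φ ((fun t : ℝ => ((1 : gl n), L + t • Y)) 0) := by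
      rw [hc0]; exact hφ
    have hcomp := hφ'.comp_hasDerivAt (0 : ℝ) hc1
    exact (h2 1 L hdet1 Y).unique hcomp
  -- ⟪df L, Y⟫ = φ (0, Y)
  have hφdf : ∀ Y : gl n, trForm (df L) Y = φ ((0 : gl n), Y) := by
    intro Y
    have hc1 : HasDerivAt (fun t : ℝ => ((1 : gl n), L + t • Y))
        (((0 : gl n), Y) : gl n × gl n) 0 := by
      have h : HasDerivAt (fun t : ℝ => L + t • Y) Y 0 := by
        have h0 := ((hasDerivAt_id (0 : ℝ)).smul_const Y).const_add L
        simp only [one_smul, id_eq] at h0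
        exact h0
      exact (hasDerivAt_const 0 (1 : gl n)).prodMk h
    have hc0 : ((fun t : ℝ => ((1 : gl n), L + t • Y)) 0) = ((1 : gl n), L) := by simp
    have hφ' : HasFDerivAt F φ ((fun t : ℝ => ((1 : gl n), L + t • Y)) 0) := by
      rw [hc0]; exact hφ
    have hcomp := hφ'.comp_hasDerivAt (0 : ℝ) hc1
    exact (hdf L Y).unique hcomp
  have hD2 : D2 (1, L) = df L := trForm_ext fun Y => (hφ2 Y).trans (hφdf Y).symm
  refine ⟨?_, hD2⟩
  -- upper-triangular constraint
  have hupper : ∀ X : gl n, X.BlockTriangular id → trForm Nm X = 0 := by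
    intro X hX
    have hBT : ∀ t : ℝ, (NormedSpace.exp (-(t • X))).BlockTriangular id := by
      intro t
      refine exp_BT ?_
      intro i j hij
      simp [Matrix.neg_apply, Matrix.smul_apply, hX hij]
    have hconst : ∀ᶠ t in nhds (0 : ℝ),
        F (NormedSpace.exp (t • X) * 1, L) = F (1, L) := by
      filter_upwards [eventually_diag_pos X] with t hpt
      have hb : InB (NormedSpace.exp (-(t • X))) := ⟨hBT t, hpt⟩
      have hbinv : (NormedSpace.exp (-(t • X)))⁻¹ = NormedSpace.exp (t • X) :=
        Matrix.inv_eq_right_inv (exp_neg_mul_exp (t • X))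
      have horth1 : IsOrth (1 : gl n) := by simp [IsOrth]
      have h := hFinv 1 (NormedSpace.exp (-(t • X))) 1 L horth1 hb hdet1
      simpa [hbinv, inv_one] using h
    have hconst' : (fun _ : ℝ => F (1, L))
        =ᶠ[nhds (0 : ℝ)] fun t : ℝ => F (NormedSpace.exp (t • X) * 1, L) :=
      hconst.mono fun t ht => ht.symm
    have hd : HasDerivAt (fun _ : ℝ => F (1, L)) (trForm Nm X) 0 :=
      (h1 1 L hdet1 X).congr_of_eventuallyEq hconst'
    exact hd.unique (hasDerivAt_const 0 _)
  -- skew-symmetric constraint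
  have hskew : ∀ X : gl n, Xᵀ = -X →
      trForm Nm X = trForm (df L * L - L * df L) X := by
    intro X hX
    set W := X * L - L * X with hW
    -- the conjugation curve
    have hneg : HasDerivAt (fun t : ℝ => NormedSpace.exp (-(t • X))) (-X) 0 := by
      have h := hasDerivAt_expCurve_zero (-X)
      simpa [smul_neg] using h
    have hm : HasDerivAt
        (fun t : ℝ => NormedSpace.exp (t • X) * L * NormedSpace.exp (-(t • X)))
        (X * L - L * X) 0 := by
      have hpos : HasDerivAt (fun t : ℝ => NormedSpace.exp (t • X) * L) (X * L) 0 := by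
        exact (hasDerivAt_expCurve_zero X).mul_const L
      have h := hpos.mul hneg
      simp only [zero_smul, neg_zero, NormedSpace.exp_zero, mul_one, one_mul, mul_neg,
        ← sub_eq_add_neg] at h
      exact h
    have hc3 : HasDerivAt (fun t : ℝ => ((NormedSpace.exp (t • X) : gl n),
        NormedSpace.exp (t • X) * L * NormedSpace.exp (-(t • X))))
        ((X, W) : gl n × gl n) 0 := (hasDerivAt_expCurve_zero X).prodMk hm
    have hc0 : ((fun t : ℝ => ((NormedSpace.exp (t • X) : gl n),
        NormedSpace.exp (t • X) * L * NormedSpace.exp (-(t • X)))) 0)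
        = ((1 : gl n), L) := by
      simp [NormedSpace.exp_zero]
    have hφ' : HasFDerivAt F φ ((fun t : ℝ => ((NormedSpace.exp (t • X) : gl n),
        NormedSpace.exp (t • X) * L * NormedSpace.exp (-(t • X)))) 0) := by
      rw [hc0]; exact hφ
    have hcomp := hφ'.comp_hasDerivAt (0 : ℝ) hc3
    -- the curve is constant by invariance
    have hconst : ∀ t : ℝ,
        F (NormedSpace.exp (t • X),
          NormedSpace.exp (t • X) * L * NormedSpace.exp (-(t • X))) = F (1, L) := by
      intro t
      have horth : IsOrth (NormedSpace.exp (t • X)) := by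
        unfold IsOrth
        have ht : (NormedSpace.exp (t • X))ᵀ = NormedSpace.exp (-(t • X)) := by
          rw [← Matrix.exp_transpose]
          congr 1
          rw [Matrix.transpose_smul, hX, smul_neg]
        rw [ht]
        exact exp_neg_mul_exp (t • X)
      have hb : InB (1 : gl n) := ⟨Matrix.blockTriangular_one, fun i => by simp⟩
      have hainv : (NormedSpace.exp (t • X))⁻¹ = NormedSpace.exp (-(t • X)) :=
        Matrix.inv_eq_right_inv (exp_mul_exp_neg (t • X))
      have h := hFinv (NormedSpace.exp (t • X)) 1 1 L horth hb hdet1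
      simpa [hainv, inv_one] using h
    have hzero : φ ((X, W) : gl n × gl n) = 0 := by
      have hconst' : (fun _ : ℝ => F (1, L)) =ᶠ[nhds (0 : ℝ)]
          fun t : ℝ => F ((fun t : ℝ => ((NormedSpace.exp (t • X) : gl n),
            NormedSpace.exp (t • X) * L * NormedSpace.exp (-(t • X)))) t) :=
        Filter.Eventually.of_forall fun t => (hconst t).symm
      have hd : HasDerivAt (fun _ : ℝ => F (1, L)) (φ ((X, W) : gl n × gl n)) 0 :=
        hcomp.congr_of_eventuallyEq hconst'
      exact (hd.unique (hasDerivAt_const 0 _))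
    have hsplit : φ ((X, W) : gl n × gl n)
        = φ ((X, (0 : gl n)) : gl n × gl n) + φ (((0 : gl n), W) : gl n × gl n) := by
      have h : ((X, W) : gl n × gl n) = (X, (0 : gl n)) + ((0 : gl n), W) := by simp
      rw [h, map_add]
    have hkey : trForm Nm X = -(trForm (df L) W) := by
      rw [hφ1 X, hφdf W]
      have := hsplit
      rw [hzero] at this
      linarith [this.symm]
    rw [hkey, hW]
    -- trace algebra
    have e1 : (df L * (X * L)).trace = (L * df L * X).trace := by
      rw [Matrix.trace_mul_comm (df L) (X * L), Matrix.mul_assoc,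
        Matrix.trace_mul_comm X (L * df L)]
    have e2 : (df L * (L * X)).trace = (df L * L * X).trace := by
      rw [Matrix.mul_assoc]
    simp only [trForm, Matrix.mul_sub, Matrix.sub_mul, Matrix.trace_sub]
    rw [e1, e2]
    ring
  -- conclude entrywise
  set Z := df L * L - L * df L with hZ
  have hz : ∀ p q : Fin n, p ≤ q → Nm q p = 0 := by
    intro p q hpq
    have hX : (Matrix.single p q (1 : ℝ)).BlockTriangular id :=
      Matrix.blockTriangular_single hpq 1
    have := hupper _ hX
    rwa [trForm_std] at this
  have hsk : ∀ p q : Fin n, Nm q p - Nm p q = Z q p - Z p q := by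
    intro p q
    have hXt : (Matrix.single p q (1 : ℝ) - Matrix.single q p 1)ᵀ
        = -(Matrix.single p q (1 : ℝ) - Matrix.single q p 1) := by
      rw [Matrix.transpose_sub, stdBasis_transpose, stdBasis_transpose, neg_sub]
    have h := hskew _ hXt
    rw [trForm_sub_right, trForm_sub_right, trForm_std, trForm_std, trForm_std,
      trForm_std] at h
    exact h
  ext p q
  rw [rhs_entry]
  by_cases h : p < q
  · rw [if_pos h]
    have e := hsk q p
    have e0 := hz p q h.le
    linarith
  · rw [if_neg h]
    exact hz q p (not_lt.1 h)
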